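/- For every integer k ≥ 1, the center of the group Q_k with presentation ⟨x, y, t | [t,y] = x^k, x t = t x, x y = y x⟩ equals the cyclic subgroup generated by (the image of) x, and x has infinite order in Q_k. -/

import Mathlib

namespace Stmt6

/-- The free group generators `x, y, t`. -/
private abbrev qx : FreeGroup (Fin 3) := FreeGroup.of 0
private abbrev qy : FreeGroup (Fin 3) := FreeGroup.of 1
private abbrev qt : FreeGroup (Fin 3) := FreeGroup.of 2

/-- The relators of the presentation `⟨x, y, t | [t,y] = xᵏ, x t = t x, x y = y x⟩`,
where `[t,y] = t y t⁻¹ y⁻¹`. -/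
def qRels (k : ℤ) : Set (FreeGroup (Fin 3)) :=
  { qt * qy * qt⁻¹ * qy⁻¹ * (qx ^ k)⁻¹,
    qx * qt * qx⁻¹ * qt⁻¹,
    qx * qy * qx⁻¹ * qy⁻¹ }

/-- `Q k = ⟨x, y, t | [t,y] = xᵏ, x t = t x, x y = y x⟩`. -/
abbrev Q (k : ℤ) : Type := PresentedGroup (qRels k)

/-- The image of the generator `x` in `Q k`. -/
def xQ (k : ℤ) : Q k := PresentedGroup.of 0

end Stmt6

/-!
In a group generated by `x, y, t` with `x` central and `t y = xᵏ y t`, the twisted commutation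
`tᵐ yⁿ = xᵏᵐⁿ yⁿ tᵐ` brings every element to the form `xᵃ yᵇ tᶜ`, and commuting `xᵃ yᵇ tᶜ`
past `t` and `y` produces the factors `xᵏᵇ` and `xᵏᶜ`. So when `x` has infinite order and
`k ≠ 0`, the central elements are exactly the powers of `x`. In `Q k` the order of `x` is read
off the action on `ℤ²` in which `x` and `y` are the unit translations and `t` is the shear
`(p, q) ↦ (p + k q, q)`.
-/

open Subgroup

section TwistedCommutation

variable {G : Type*} [Group G]

theorem zpow_mul_zpow_eq_of_mul_eq {z y t : G} (hzy : Commute z y) (hzt : Commute z t)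
    (h : t * y = z * y * t) (m n : ℤ) : t ^ m * y ^ n = z ^ (m * n) * y ^ n * t ^ m := by
  have hyt : SemiconjBy y⁻¹ t (z * t) := by
    rw [SemiconjBy.inv_symm_left_iff, SemiconjBy, h, ← mul_assoc, hzy.eq]
  have htm : SemiconjBy (t ^ m) y (z ^ m * y) := by
    have := hyt.zpow_right m
    rw [SemiconjBy.inv_symm_left_iff, SemiconjBy, hzt.mul_zpow] at this
    rw [SemiconjBy, ← this, ← mul_assoc, (hzy.zpow_left m).eq]
  have := htm.zpow_right n
  rw [SemiconjBy, (hzy.zpow_left m).mul_zpow, ← zpow_mul] at this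
  exact this

variable {x y t : G} {k : ℤ}

theorem mem_center_of_closure_eq_top (hxy : Commute x y) (hxt : Commute x t)
    (hgen : closure {x, y, t} = ⊤) : x ∈ center G := by
  have : closure {x, y, t} ≤ centralizer {x} := by
    rw [closure_le]
    rintro g (rfl | rfl | rfl) <;> simp [mem_centralizer_singleton_iff, hxy.eq, hxt.eq]
  rw [hgen, top_le_iff, centralizer_eq_top_iff_subset, Set.singleton_subset_iff] at this
  exact this

theorem exists_eq_zpow_mul_zpow_mul_zpow (hxy : Commute x y) (hxt : Commute x t)
    (hty : t * y = x ^ k * y * t) (hgen : closure {x, y, t} = ⊤) (g : G) :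
    ∃ a b c : ℤ, g = x ^ a * y ^ b * t ^ c := by
  have hx := mem_center_of_closure_eq_top hxy hxt hgen
  have hxg (a : ℤ) (g : G) : Commute (x ^ a) g :=
    (mem_center_iff.mp (zpow_mem hx a) g).symm
  have hmul : ∀ s ∈ ({x, y, t} : Set G), ∀ (e : ℤ) (g : G),
      (∃ a b c : ℤ, g = x ^ a * y ^ b * t ^ c) →
        ∃ a b c : ℤ, g * s ^ e = x ^ a * y ^ b * t ^ c := by
    rintro s hs e _ ⟨a, b, c, rfl⟩
    rcases hs with hs | hs | hs <;> rw [hs]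
    · refine ⟨a + e, b, c, ?_⟩
      rw [← (hxg e _).eq, zpow_add, mul_assoc, mul_assoc, mul_assoc, (hxg e _).left_comm]
    · refine ⟨a + k * c * e, b + e, c, ?_⟩
      rw [mul_assoc, zpow_mul_zpow_eq_of_mul_eq (hxy.zpow_left k) (hxt.zpow_left k) hty c e,
        ← zpow_mul, zpow_add, zpow_add]
      simp only [mul_assoc, (hxg _ (y ^ b)).left_comm]
    · exact ⟨a, b, c + e, by rw [mul_assoc, ← zpow_add]⟩
  have hg : g ∈ closure {x, y, t} := hgen ▸ mem_top g
  induction hg using closure_induction_right with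
  | one => exact ⟨0, 0, 0, by simp⟩
  | mul_right g _ s hs ih => simpa using hmul s hs 1 g ih
  | mul_inv_cancel g _ s hs ih => simpa using hmul s hs (-1) g ih

theorem center_eq_zpowers (hk : k ≠ 0) (hx : ¬IsOfFinOrder x) (hxy : Commute x y)
    (hxt : Commute x t) (hty : t * y = x ^ k * y * t) (hgen : closure {x, y, t} = ⊤) :
    center G = zpowers x := by
  have hxc := mem_center_of_closure_eq_top hxy hxt hgen
  have hxg (a : ℤ) (g : G) : Commute (x ^ a) g :=
    (mem_center_iff.mp (zpow_mem hxc a) g).symm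
  have hcomm := zpow_mul_zpow_eq_of_mul_eq (hxy.zpow_left k) (hxt.zpow_left k) hty
  have eq_zero {n : ℤ} (h : x ^ (k * n) = 1) : n = 0 := by
    rw [← zpow_zero x] at h
    simpa [hk] using injective_zpow_iff_not_isOfFinOrder.mpr hx h
  refine le_antisymm (fun g hg ↦ ?_) (zpowers_le.mpr hxc)
  obtain ⟨a, b, c, rfl⟩ := exists_eq_zpow_mul_zpow_mul_zpow hxy hxt hty hgen g
  have hgt : t * (x ^ a * y ^ b * t ^ c) = x ^ (k * b) * (x ^ a * y ^ b * t ^ c * t) := by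
    have := hcomm 1 b
    rw [zpow_one, one_mul, ← zpow_mul] at this
    rw [← mul_assoc, ← mul_assoc, ← (hxg a t).eq, mul_assoc (x ^ a), this]
    group
  have hgy : x ^ a * y ^ b * t ^ c * y = x ^ (k * c) * (y * (x ^ a * y ^ b * t ^ c)) := by
    have := hcomm c 1
    rw [zpow_one, mul_one, ← zpow_mul] at this
    rw [mul_assoc _ (t ^ c), this]
    simp only [mul_assoc, (hxg (k * c) _).left_comm]
    rw [← (hxg a y).left_comm, (Commute.self_zpow y b).left_comm]
  have hb : b = 0 := eq_zero (by
    rwa [← (mem_center_iff.mp hg t), right_eq_mul] at hgt)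
  have hc : c = 0 := eq_zero (by
    rwa [(mem_center_iff.mp hg y), right_eq_mul] at hgy)
  subst hb hc
  exact ⟨a, by simp⟩

end TwistedCommutation

namespace Stmt6

def yQ (k : ℤ) : Q k := PresentedGroup.of 1

def tQ (k : ℤ) : Q k := PresentedGroup.of 2

theorem commute_xQ_yQ (k : ℤ) : Commute (xQ k) (yQ k) :=
  PresentedGroup.mk_eq_mk_of_mul_inv_mem (x := qx * qy) (y := qy * qx)
    (by simp [qRels, mul_assoc])

theorem commute_xQ_tQ (k : ℤ) : Commute (xQ k) (tQ k) :=
  PresentedGroup.mk_eq_mk_of_mul_inv_mem (x := qx * qt) (y := qt * qx)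
    (by simp [qRels, mul_assoc])

theorem tQ_mul_yQ (k : ℤ) : tQ k * yQ k = xQ k ^ k * yQ k * tQ k :=
  PresentedGroup.mk_eq_mk_of_mul_inv_mem (x := qt * qy) (y := qx ^ k * qy * qt)
    (by simp [qRels, mul_assoc])

theorem closure_xQ_yQ_tQ (k : ℤ) : closure {xQ k, yQ k, tQ k} = ⊤ := by
  rw [← PresentedGroup.closure_range_of]
  congr
  ext g
  simp [Fin.exists_fin_succ, xQ, yQ, tQ, eq_comm]

def shear (k : ℤ) : Equiv.Perm (ℤ × ℤ) where
  toFun v := (v.1 + k * v.2, v.2)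
  invFun v := (v.1 - k * v.2, v.2)
  left_inv v := by simp
  right_inv v := by simp

def toPerm (k : ℤ) : Q k →* Equiv.Perm (ℤ × ℤ) :=
  PresentedGroup.toGroup (f := ![Equiv.addRight (1, 0), Equiv.addRight (0, 1), shear k]) <| by
    rintro r (rfl | rfl | rfl) <;> ext ⟨p, q⟩ <;> simp [shear] <;> ring

theorem not_isOfFinOrder_xQ (k : ℤ) : ¬IsOfFinOrder (xQ k) := by
  intro h
  obtain ⟨n, hn, hx⟩ := isOfFinOrder_iff_zpow_eq_one.mp ((toPerm k).isOfFinOrder h)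
  exact hn (by simpa [toPerm, xQ] using congrArg (· (0, 0)) hx)

theorem stmt6 (k : ℤ) (hk : 1 ≤ k) :
    Subgroup.center (Q k) = Subgroup.zpowers (xQ k) ∧ ¬ IsOfFinOrder (xQ k) :=
  ⟨center_eq_zpowers (by omega) (not_isOfFinOrder_xQ k) (commute_xQ_yQ k) (commute_xQ_tQ k)
    (tQ_mul_yQ k) (closure_xQ_yQ_tQ k), not_isOfFinOrder_xQ k⟩

end Stmt6
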